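/- Let p be a prime and suppose F contains a primitive p-th root of unity ω. Let Φ, Ψ ∈ F(x_1,…,x_n) and γ ∈ S_n with γ^p = id, suppose G_Φ is the disjoint union of the cosets G_Ψ, γG_Ψ, γ²G_Ψ, …, γ^{p−1}G_Ψ, and suppose γG_Ψ = G_Ψγ. Then the element Θ = Ψ + ωγΨ + (ωγ)²Ψ + ⋯ + (ωγ)^{p−1}Ψ = Σ_{i=0}^{p−1} ω^i·(γ^iΨ) satisfies G_Θ ⊇ G_Ψ (hence Θ ∈ F(e_1,…,e_n,Ψ)) and Θ^p ∈ F(e_1,…,e_n,Φ). -/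

import Mathlib

open MvPolynomial

/-- The action of a permutation `σ ∈ S_n` on the rational function field `F(x_1,…,x_n)`,
given by `Φ(x_1,…,x_n) ↦ Φ(x_{σ(1)},…,x_{σ(n)})`. -/
noncomputable def permAct (F : Type*) [Field F] (n : ℕ) (σ : Equiv.Perm (Fin n)) :
    FractionRing (MvPolynomial (Fin n) F) ≃+* FractionRing (MvPolynomial (Fin n) F) :=
  IsFractionRing.ringEquivOfRingEquiv (MvPolynomial.renameEquiv F σ).toRingEquiv

/-- The constants from `F` inside `F(x_1,…,x_n)`. -/
noncomputable def constSet (F : Type*) [Field F] (n : ℕ) :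
    Set (FractionRing (MvPolynomial (Fin n) F)) :=
  Set.range fun a : F =>
    algebraMap (MvPolynomial (Fin n) F) (FractionRing (MvPolynomial (Fin n) F)) (C a)

/-- The elementary symmetric polynomials `e_1,…,e_n` inside `F(x_1,…,x_n)`. -/
noncomputable def esymmSet (F : Type*) [Field F] (n : ℕ) :
    Set (FractionRing (MvPolynomial (Fin n) F)) :=
  Set.range fun i : Fin n =>
    algebraMap (MvPolynomial (Fin n) F) (FractionRing (MvPolynomial (Fin n) F))
      (esymm (Fin n) F ((i : ℕ) + 1))

/-!
Since `ω` is fixed by every permutation and `ω^p = 1`, the Lagrange resolvent `Θ` satisfies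
`ω · γΘ = Θ`, i.e. `γ^i` multiplies `Θ` by `ω^{-i}`. As `γ` normalizes `G_Ψ`, each `σ ∈ G_Ψ`
permutes the summands `γ^iΨ` trivially, so `σΘ = Θ`; an element of `G_Φ` lies in some coset
`γ^i G_Ψ`, hence sends `Θ` to `ω^{-i}Θ` and fixes `Θ^p`.

Membership in the subfields is the Galois correspondence for `S_n` acting on `F(x_1,…,x_n)`:
the fixed field of `S_n` is `F(e_1,…,e_n)`, because a symmetric rational function `f/g` equals
`(f ∏_{σ ≠ 1} σg) / ∏_σ σg`, a quotient of symmetric polynomials; and whatever is fixed by the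
stabilizer of `ξ` lies in that fixed field with `ξ` adjoined.
-/

theorem Subgroup.mem_normalizer_of_leftCoset_eq_rightCoset {G : Type*} [Group G]
    {H : Subgroup G} {g : G} (h : {x | ∃ a ∈ H, x = g * a} = {x | ∃ a ∈ H, x = a * g}) :
    g ∈ Subgroup.normalizer (H : Set G) := by
  refine Subgroup.mem_normalizer_iff''.mpr fun a => ⟨fun ha => ?_, fun ha => ?_⟩
  · obtain ⟨b, hb, hab⟩ : a * g ∈ {x | ∃ a ∈ H, x = g * a} := h ▸ ⟨a, ha, rfl⟩
    rwa [mul_assoc, hab, inv_mul_cancel_left]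
  · obtain ⟨b, hb, hab⟩ : g * (g⁻¹ * a * g) ∈ {x | ∃ a ∈ H, x = a * g} :=
      h ▸ ⟨_, ha, rfl⟩
    rw [mul_assoc, mul_inv_cancel_left, mul_right_cancel_iff] at hab
    rwa [hab]

section LagrangeResolvent

variable {G K : Type*} [Group G] [CommRing K] [MulSemiringAction G K]

def lagrangeResolvent (c : K) (γ : G) (p : ℕ) (ψ : K) : K :=
  ∑ i ∈ Finset.range p, c ^ i * γ ^ i • ψ

variable {c : K} {γ : G} {p : ℕ} {ψ : K}

theorem mul_smul_lagrangeResolvent (hc : ∀ g : G, g • c = c) (hcp : c ^ p = 1)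
    (hγp : γ ^ p = 1) : c * γ • lagrangeResolvent c γ p ψ = lagrangeResolvent c γ p ψ := by
  set f : ℕ → K := fun i => c ^ i * γ ^ i • ψ
  have hf : f p = f 0 := by simp only [f, hcp, hγp, pow_zero]
  calc c * γ • ∑ i ∈ Finset.range p, f i = ∑ i ∈ Finset.range p, f (i + 1) := by
        rw [Finset.smul_sum, Finset.mul_sum]
        refine Finset.sum_congr rfl fun i _ => ?_
        simp only [f, smul_mul', smul_pow', hc, smul_smul, ← pow_succ', pow_succ]
        ring
    _ = ∑ i ∈ Finset.range p, f i := by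
        have h := Finset.sum_range_succ' f p
        rw [Finset.sum_range_succ, hf] at h
        exact (add_right_cancel h).symm

theorem pow_mul_pow_smul_lagrangeResolvent (hc : ∀ g : G, g • c = c) (hcp : c ^ p = 1)
    (hγp : γ ^ p = 1) (i : ℕ) :
    c ^ i * γ ^ i • lagrangeResolvent c γ p ψ = lagrangeResolvent c γ p ψ := by
  induction i with
  | zero => rw [pow_zero, pow_zero, one_smul, one_mul]
  | succ i ih =>
    calc c ^ (i + 1) * γ ^ (i + 1) • lagrangeResolvent c γ p ψ
        = c ^ i * γ ^ i • (c * γ • lagrangeResolvent c γ p ψ) := by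
          rw [smul_mul', hc, smul_smul, ← pow_succ, pow_succ, mul_assoc]
      _ = lagrangeResolvent c γ p ψ := by rw [mul_smul_lagrangeResolvent hc hcp hγp, ih]

theorem stabilizer_le_stabilizer_lagrangeResolvent (hc : ∀ g : G, g • c = c)
    (hγ : γ ∈ Subgroup.normalizer (MulAction.stabilizer G ψ : Set G)) :
    MulAction.stabilizer G ψ ≤ MulAction.stabilizer G (lagrangeResolvent c γ p ψ) := by
  intro σ hσ
  rw [MulAction.mem_stabilizer_iff, lagrangeResolvent, Finset.smul_sum]
  refine Finset.sum_congr rfl fun i _ => ?_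
  have hconj : (γ ^ i)⁻¹ * σ * γ ^ i ∈ MulAction.stabilizer G ψ :=
    (Subgroup.mem_normalizer_iff''.mp (Subgroup.pow_mem _ hγ i) σ).mp hσ
  rw [smul_mul', smul_pow', hc, smul_smul,
    show σ * γ ^ i = γ ^ i * ((γ ^ i)⁻¹ * σ * γ ^ i) by group, mul_smul, hconj]

theorem smul_lagrangeResolvent_pow_of_mem_stabilizer (hc : ∀ g : G, g • c = c)
    (hcp : c ^ p = 1) (hγp : γ ^ p = 1)
    (hγ : γ ∈ Subgroup.normalizer (MulAction.stabilizer G ψ : Set G))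
    {σ : G} {i : ℕ} (hσ : (γ ^ i)⁻¹ * σ ∈ MulAction.stabilizer G ψ) :
    σ • lagrangeResolvent c γ p ψ ^ p = lagrangeResolvent c γ p ψ ^ p := by
  have hσγ : σ • lagrangeResolvent c γ p ψ = γ ^ i • lagrangeResolvent c γ p ψ := by
    rw [show σ = γ ^ i * ((γ ^ i)⁻¹ * σ) by group, mul_smul,
      stabilizer_le_stabilizer_lagrangeResolvent hc hγ hσ]
  calc σ • lagrangeResolvent c γ p ψ ^ p
      = (c ^ i) ^ p * (γ ^ i • lagrangeResolvent c γ p ψ) ^ p := by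
        rw [smul_pow', hσγ, ← pow_mul, mul_comm i, pow_mul, hcp, one_pow, one_mul]
    _ = lagrangeResolvent c γ p ψ ^ p := by
        rw [← mul_pow, pow_mul_pow_smul_lagrangeResolvent hc hcp hγp]

end LagrangeResolvent

theorem mem_adjoin_fixedPoints_of_stabilizer_le {G K : Type*} [Group G] [Finite G] [Field K]
    [MulSemiringAction G K] {ξ x : K}
    (h : MulAction.stabilizer G ξ ≤ MulAction.stabilizer G x) :
    x ∈ IntermediateField.adjoin (FixedPoints.subfield G K) {ξ} := by
  rw [← IsGalois.fixedField_fixingSubgroup (IntermediateField.adjoin _ {ξ})]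
  rintro ⟨f, hf⟩
  obtain ⟨g, rfl⟩ := FixedPoints.toAlgAut_surjective G K f
  exact h (hf ⟨ξ, IntermediateField.mem_adjoin_simple_self _ ξ⟩)

section PermAction

variable {F : Type*} [Field F] {n : ℕ}

local notation "R" => MvPolynomial (Fin n) F
local notation "K" => FractionRing (MvPolynomial (Fin n) F)

variable (F n) in
noncomputable def renamePermHom : Equiv.Perm (Fin n) →* (R ≃+* R) where
  toFun σ := (renameEquiv F σ).toRingEquiv
  map_one' := RingEquiv.ext fun f => rename_id_apply f
  map_mul' σ τ := RingEquiv.ext fun f => (rename_rename τ σ f).symm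

noncomputable instance : MulSemiringAction (Equiv.Perm (Fin n)) K :=
  MulSemiringAction.compHom K
    ((IsFractionRing.ringEquivOfRingEquivHom R K).comp (renamePermHom F n))

theorem perm_smul_eq_permAct (σ : Equiv.Perm (Fin n)) (x : K) : σ • x = permAct F n σ x := rfl

theorem permAct_algebraMap (σ : Equiv.Perm (Fin n)) (f : R) :
    permAct F n σ (algebraMap R K f) = algebraMap R K (rename σ f) :=
  IsFractionRing.ringEquivOfRingEquiv_algebraMap _ f

theorem algebraMap_mem_closure_esymm_of_isSymmetric {q : R} (hq : q.IsSymmetric) :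
    algebraMap R K q ∈ Subfield.closure (constSet F n ∪ esymmSet F n) := by
  obtain ⟨r, hr⟩ := esymmAlgHom_surjective (σ := Fin n) (n := n) F (by simp) ⟨q, hq⟩
  have hrq : aeval (fun i : Fin n => esymm (Fin n) F (i + 1)) r = q := by
    rw [← esymmAlgHom_apply, hr]
  rw [← hrq, aeval_def, hom_eval₂]
  refine eval₂_mem (fun _ _ => ?_) fun i => ?_
  · exact Subfield.subset_closure (Or.inl ⟨_, rfl⟩)
  · exact Subfield.subset_closure (Or.inr ⟨i, rfl⟩)

theorem exists_isSymmetric_div_of_forall_smul_eq {r : K}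
    (hr : ∀ σ : Equiv.Perm (Fin n), σ • r = r) :
    ∃ f g : R, f.IsSymmetric ∧ g.IsSymmetric ∧ g ≠ 0 ∧
      r = algebraMap R K f / algebraMap R K g := by
  obtain ⟨f, g, hg, rfl⟩ := IsFractionRing.div_surjective (A := R) r
  set g₀ : R := ∏ σ : Equiv.Perm (Fin n), rename σ g
  have hg₀ : g₀.IsSymmetric := fun τ => by
    simp only [g₀, map_prod, rename_rename]
    exact Fintype.prod_equiv (Equiv.mulLeft τ) _ _ fun σ => rfl
  have hg₀0 : g₀ ≠ 0 := Finset.prod_ne_zero_iff.mpr fun σ _ =>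
    (map_ne_zero_iff _ (rename_injective _ σ.injective)).mpr (nonZeroDivisors.ne_zero hg)
  obtain ⟨q, hq⟩ : g ∣ g₀ := by
    simpa using Finset.dvd_prod_of_mem (fun σ : Equiv.Perm (Fin n) => rename σ g)
      (Finset.mem_univ 1)
  have hfg₀ :
      algebraMap R K f / algebraMap R K g * algebraMap R K g₀ = algebraMap R K (f * q) := by
    have : algebraMap R K g ≠ 0 := IsFractionRing.to_map_ne_zero_of_mem_nonZeroDivisors hg
    rw [hq, map_mul, map_mul]
    field_simp
  refine ⟨f * q, g₀, fun τ => IsFractionRing.injective R K ?_, hg₀, hg₀0, ?_⟩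
  · rw [← permAct_algebraMap, ← hfg₀, map_mul, ← perm_smul_eq_permAct, hr, permAct_algebraMap,
      hg₀ τ]
  · rw [← hfg₀, mul_div_cancel_right₀ _
      ((map_ne_zero_iff _ (IsFractionRing.injective R K)).mpr hg₀0)]

theorem fixedPoints_subfield_le_closure_esymm :
    FixedPoints.subfield (Equiv.Perm (Fin n)) K ≤
      Subfield.closure (constSet F n ∪ esymmSet F n) := by
  intro r hr
  obtain ⟨f, g, hf, hg, -, rfl⟩ := exists_isSymmetric_div_of_forall_smul_eq hr
  exact Subfield.div_mem _ (algebraMap_mem_closure_esymm_of_isSymmetric hf)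
    (algebraMap_mem_closure_esymm_of_isSymmetric hg)

theorem mem_closure_esymm_insert_of_stabilizer_le {ξ x : K}
    (h : MulAction.stabilizer (Equiv.Perm (Fin n)) ξ ≤ MulAction.stabilizer _ x) :
    x ∈ Subfield.closure (constSet F n ∪ esymmSet F n ∪ {ξ}) := by
  have hx := mem_adjoin_fixedPoints_of_stabilizer_le h
  rw [← IntermediateField.mem_toSubfield, IntermediateField.adjoin_toSubfield] at hx
  refine Subfield.closure_le.mpr (Set.union_subset ?_ ?_) hx
  · rintro _ ⟨y, rfl⟩
    exact Subfield.closure_mono Set.subset_union_left (fixedPoints_subfield_le_closure_esymm y.2)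
  · exact Set.singleton_subset_iff.mpr (Subfield.subset_closure (Or.inr rfl))

end PermAction

theorem lagrange_resolvent_power_mem_general
    (F : Type*) [Field F] (n : ℕ)
    (p : ℕ) (ω : F) (hω : IsPrimitiveRoot ω p)
    (Φ Ψ : FractionRing (MvPolynomial (Fin n) F))
    (γ : Equiv.Perm (Fin n)) (hγp : γ ^ p = 1)
    (hdecomp : ∀ σ : Equiv.Perm (Fin n), permAct F n σ Φ = Φ ↔
      ∃! i : Fin p, permAct F n ((γ ^ (i : ℕ))⁻¹ * σ) Ψ = Ψ)
    (hcomm : {x : Equiv.Perm (Fin n) | ∃ h, permAct F n h Ψ = Ψ ∧ x = γ * h} =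
      {x : Equiv.Perm (Fin n) | ∃ h, permAct F n h Ψ = Ψ ∧ x = h * γ})
    (Θ : FractionRing (MvPolynomial (Fin n) F))
    (hΘ : Θ = ∑ i ∈ Finset.range p,
      algebraMap (MvPolynomial (Fin n) F) (FractionRing (MvPolynomial (Fin n) F)) (C ω) ^ i
        * permAct F n (γ ^ i) Ψ) :
    (∀ σ : Equiv.Perm (Fin n), permAct F n σ Ψ = Ψ → permAct F n σ Θ = Θ) ∧
    Θ ∈ Subfield.closure (constSet F n ∪ esymmSet F n ∪ {Ψ}) ∧
    Θ ^ p ∈ Subfield.closure (constSet F n ∪ esymmSet F n ∪ {Φ}) := by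
  set c := algebraMap (MvPolynomial (Fin n) F) (FractionRing (MvPolynomial (Fin n) F)) (C ω)
  have hc : ∀ σ : Equiv.Perm (Fin n), σ • c = c := fun σ => by
    rw [perm_smul_eq_permAct, permAct_algebraMap, rename_C]
  have hcp : c ^ p = 1 := by rw [← map_pow, ← map_pow, hω.pow_eq_one, map_one, map_one]
  have hγ : γ ∈ Subgroup.normalizer (MulAction.stabilizer (Equiv.Perm (Fin n)) Ψ : Set _) :=
    Subgroup.mem_normalizer_of_leftCoset_eq_rightCoset hcomm
  replace hΘ : Θ = lagrangeResolvent c γ p Ψ := hΘ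
  subst hΘ
  have hstab := stabilizer_le_stabilizer_lagrangeResolvent (p := p) hc hγ
  refine ⟨fun σ hσ => hstab hσ, mem_closure_esymm_insert_of_stabilizer_le hstab,
    mem_closure_esymm_insert_of_stabilizer_le fun σ hσ => ?_⟩
  obtain ⟨i, hi, -⟩ := (hdecomp σ).mp hσ
  exact smul_lagrangeResolvent_pow_of_mem_stabilizer hc hcp hγp hγ hi

/-- **Theorem 5.3.** Let `p` be prime, `ω ∈ F` a primitive `p`-th root of unity, and suppose
`γ^p = id`, `G_Φ` is the disjoint union of the cosets `G_Ψ, γG_Ψ, …, γ^{p−1}G_Ψ`, and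
`γG_Ψ = G_Ψγ`.  Then `Θ = Σ_{i=0}^{p−1} ω^i·(γ^iΨ)` satisfies `G_Θ ⊇ G_Ψ` (hence
`Θ ∈ F(e_1,…,e_n,Ψ)`) and `Θ^p ∈ F(e_1,…,e_n,Φ)`. -/
theorem lagrange_resolvent_power_mem
    (F : Type*) [Field F] [CharZero F] (n : ℕ)
    (p : ℕ) (hp : p.Prime) (ω : F) (hω : IsPrimitiveRoot ω p)
    (Φ Ψ : FractionRing (MvPolynomial (Fin n) F))
    (γ : Equiv.Perm (Fin n)) (hγp : γ ^ p = 1)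
    (hdecomp : ∀ σ : Equiv.Perm (Fin n), permAct F n σ Φ = Φ ↔
      ∃! i : Fin p, permAct F n ((γ ^ (i : ℕ))⁻¹ * σ) Ψ = Ψ)
    (hcomm : {x : Equiv.Perm (Fin n) | ∃ h, permAct F n h Ψ = Ψ ∧ x = γ * h} =
      {x : Equiv.Perm (Fin n) | ∃ h, permAct F n h Ψ = Ψ ∧ x = h * γ})
    (Θ : FractionRing (MvPolynomial (Fin n) F))
    (hΘ : Θ = ∑ i ∈ Finset.range p,
      algebraMap (MvPolynomial (Fin n) F) (FractionRing (MvPolynomial (Fin n) F)) (C ω) ^ i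
        * permAct F n (γ ^ i) Ψ) :
    (∀ σ : Equiv.Perm (Fin n), permAct F n σ Ψ = Ψ → permAct F n σ Θ = Θ) ∧
    Θ ∈ Subfield.closure (constSet F n ∪ esymmSet F n ∪ {Ψ}) ∧
    Θ ^ p ∈ Subfield.closure (constSet F n ∪ esymmSet F n ∪ {Φ}) :=
  lagrange_resolvent_power_mem_general F n p ω hω Φ Ψ γ hγp hdecomp hcomm Θ hΘ
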